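/- Fix n ≥ 1 and let φ : {−1,+1}^n → ℝ be stable. Then E_ε φ(ε) ≥ 1/2 (ε uniform on {−1,+1}^n) if and only if there exists a randomized binary prediction algorithm A with μ_A(y) ≤ φ(y) for every y ∈ {−1,+1}^n. -/

import Mathlib

open Finset

noncomputable section

/-- The real ±1 value of a Boolean bit (`true ↦ +1`, `false ↦ -1`). -/
def sgn (b : Bool) : ℝ := if b then 1 else -1

/-- The history (prefix) of the sequence `y` strictly before time `t`. -/
def pref {n : ℕ} (y : Fin n → Bool) (t : Fin n) : Fin t.1 → Bool :=
  fun s => y ⟨s.1, s.2.trans t.2⟩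

/-- Expected proportion of mistakes `μ_A(y)` of the randomized algorithm whose prediction at
round `t` is a ±1 random variable with mean `q t (pref y t) ∈ [-1,1]`. -/
def mistakes (n : ℕ) (q : (t : Fin n) → (Fin t.1 → Bool) → ℝ) (y : Fin n → Bool) : ℝ :=
  (1 / n) * ∑ t : Fin n, (1 - sgn (y t) * q t (pref y t)) / 2

/-- Expectation of `φ` under the uniform distribution on `{−1,+1}^n`
(sign sequences encoded as Boolean sequences). -/
def unifExp (n : ℕ) (φ : (Fin n → Bool) → ℝ) : ℝ :=
  (∑ y : Fin n → Bool, φ y) / 2 ^ n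

/-- `φ` is stable: flipping any single coordinate changes its value by at most `1/n`. -/
def Stable (n : ℕ) (φ : (Fin n → Bool) → ℝ) : Prop :=
  ∀ (y : Fin n → Bool) (t : Fin n),
    |φ (Function.update y t true) - φ (Function.update y t false)| ≤ 1 / n

namespace CoverAux

variable {n : ℕ}

/-- Combine: first `t` coordinates from `y`, the rest from `z`. -/
def ff (t : ℕ) (y z : Fin n → Bool) : Fin n → Bool := fun i => if i.1 < t then y i else z i

/-- Conditional expectation of `φ` given the first `t` coordinates of `y`. -/
def V (φ : (Fin n → Bool) → ℝ) (t : ℕ) (y : Fin n → Bool) : ℝ :=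
  (∑ z : Fin n → Bool, φ (ff t y z)) / 2 ^ n

lemma flip_involutive (t : Fin n) :
    Function.Involutive (fun z : Fin n → Bool => Function.update z t (!(z t))) := by
  intro z
  funext i
  by_cases h : i = t
  · subst h; simp
  · simp [Function.update_of_ne h]

/-- Summing over all sign sequences is invariant under flipping coordinate `t`. -/
lemma sum_flip (t : Fin n) (g : (Fin n → Bool) → ℝ) :
    ∑ z : Fin n → Bool, g z = ∑ z : Fin n → Bool, g (Function.update z t (!(z t))) :=
  (Equiv.sum_comp ((flip_involutive t).toPerm _) g).symm

lemma ff_succ (t : Fin n) (b : Bool) (y z : Fin n → Bool) :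
    ff (t.1 + 1) (Function.update y t b) z = Function.update (ff t.1 y z) t b := by
  funext i
  by_cases h : i = t
  · subst h; simp [ff]
  · have h' : i.1 ≠ t.1 := fun hh => h (Fin.ext hh)
    simp only [ff, Function.update_of_ne h]
    rcases lt_trichotomy i.1 t.1 with hlt | heq | hgt
    · simp [hlt, hlt.trans (Nat.lt_succ_self _)]
    · exact absurd heq h'
    · rw [if_neg (Nat.not_lt.2 (Nat.succ_le_of_lt hgt)), if_neg (Nat.not_lt.2 hgt.le)]

lemma ff_self (t : Fin n) (y z : Fin n → Bool) :
    ff t.1 y z = ff (t.1 + 1) (Function.update y t (z t)) z := by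
  rw [ff_succ]
  have : ff t.1 y z t = z t := by simp [ff]
  rw [← this, Function.update_eq_self]

lemma ff_indep (t : Fin n) (b c : Bool) (y z : Fin n → Bool) :
    ff (t.1 + 1) (Function.update y t b) (Function.update z t c) =
      ff (t.1 + 1) (Function.update y t b) z := by
  rw [ff_succ, ff_succ]
  funext i
  by_cases h : i = t
  · subst h; simp
  · simp [ff, Function.update_of_ne h]

/-- `V t` only depends on the first `t` coordinates. -/
lemma V_congr (φ : (Fin n → Bool) → ℝ) (t : ℕ) {y y' : Fin n → Bool}
    (h : ∀ i : Fin n, i.1 < t → y i = y' i) : V φ t y = V φ t y' := by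
  unfold V
  congr 1
  apply Finset.sum_congr rfl
  intro z _
  congr 1
  funext i
  by_cases hi : i.1 < t
  · simp [ff, hi, h i hi]
  · simp [ff, hi]

lemma V_zero (φ : (Fin n → Bool) → ℝ) (y : Fin n → Bool) : V φ 0 y = unifExp n φ := by
  have : ∀ z : Fin n → Bool, ff 0 y z = z := by
    intro z; funext i; simp [ff]
  unfold V unifExp
  simp only [this]

lemma V_n (φ : (Fin n → Bool) → ℝ) (y : Fin n → Bool) : V φ n y = φ y := by
  unfold V
  have : ∀ z : Fin n → Bool, ff n y z = y := by
    intro z; funext i; simp [ff, i.2]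
  simp only [this]
  rw [Finset.sum_const, Finset.card_univ]
  have hc : Fintype.card (Fin n → Bool) = 2 ^ n := by simp
  rw [hc, nsmul_eq_mul]
  push_cast
  field_simp

/-- The two-point recursion for the conditional expectation. -/
lemma V_rec (φ : (Fin n → Bool) → ℝ) (t : Fin n) (y : Fin n → Bool) :
    V φ (t.1 + 1) (Function.update y t true) + V φ (t.1 + 1) (Function.update y t false)
      = 2 * V φ t.1 y := by
  classical
  set g : Bool → (Fin n → Bool) → ℝ :=
    fun b z => φ (ff (t.1 + 1) (Function.update y t b) z) with hg
  have hindep : ∀ (b c : Bool) (z : Fin n → Bool), g b (Function.update z t c) = g b z := by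
    intro b c z; simp only [hg]; rw [ff_indep]
  have h1 : ∑ z : Fin n → Bool, g (z t) z = ∑ z : Fin n → Bool, g (!(z t)) z := by
    rw [sum_flip t (fun z => g (z t) z)]
    refine Finset.sum_congr rfl fun z _ => ?_
    rw [Function.update_self, hindep]
  have h2 : 2 * ∑ z : Fin n → Bool, g (z t) z
      = ∑ z : Fin n → Bool, (g true z + g false z) := by
    rw [two_mul]
    nth_rewrite 2 [h1]
    rw [← Finset.sum_add_distrib]
    refine Finset.sum_congr rfl fun z _ => ?_
    cases hzt : z t <;> simp [hzt, add_comm]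
  have h3 : ∑ z : Fin n → Bool, φ (ff t.1 y z) = ∑ z : Fin n → Bool, g (z t) z := by
    refine Finset.sum_congr rfl fun z _ => ?_
    simp only [hg]
    rw [← ff_self]
  unfold V
  rw [← add_div, ← mul_div_assoc]
  congr 1
  rw [h3, h2, Finset.sum_add_distrib]

/-- Stability transfers to the conditional expectations. -/
lemma V_stab (φ : (Fin n → Bool) → ℝ) (hφ : Stable n φ) (t : Fin n) (y : Fin n → Bool) :
    |V φ (t.1 + 1) (Function.update y t true) - V φ (t.1 + 1) (Function.update y t false)|
      ≤ 1 / n := by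
  have key : ∀ z : Fin n → Bool,
      |φ (ff (t.1 + 1) (Function.update y t true) z)
        - φ (ff (t.1 + 1) (Function.update y t false) z)| ≤ 1 / n := by
    intro z; rw [ff_succ, ff_succ]; exact hφ _ t
  unfold V
  rw [div_sub_div_same, abs_div, abs_of_pos (by positivity : (0:ℝ) < 2 ^ n),
    ← Finset.sum_sub_distrib]
  have h1 : |∑ z : Fin n → Bool,
      (φ (ff (t.1 + 1) (Function.update y t true) z)
        - φ (ff (t.1 + 1) (Function.update y t false) z))| ≤ 2 ^ n * (1 / n) := by
    calc _ ≤ ∑ z : Fin n → Bool, |φ (ff (t.1 + 1) (Function.update y t true) z)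
        - φ (ff (t.1 + 1) (Function.update y t false) z)| := Finset.abs_sum_le_sum_abs _ _
      _ ≤ ∑ _z : Fin n → Bool, 1 / (n:ℝ) := Finset.sum_le_sum fun z _ => key z
      _ = 2 ^ n * (1 / n) := by
          rw [Finset.sum_const, Finset.card_univ]
          simp [nsmul_eq_mul]
  calc _ ≤ ((2:ℝ) ^ n * (1 / n)) / 2 ^ n := by gcongr
    _ = 1 / n := by
        rw [mul_comm, mul_div_assoc, div_self (by positivity : (2:ℝ) ^ n ≠ 0), mul_one]

end CoverAux


open CoverAux

/-- for stable `φ`, `E_ε φ(ε) ≥ 1/2` iff there is a randomized binary prediction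
algorithm with `μ_A(y) ≤ φ(y)` for every sequence `y`. -/
theorem cover_lemma_ineq (n : ℕ) (hn : 1 ≤ n) (φ : (Fin n → Bool) → ℝ) (hφ : Stable n φ) :
    1 / 2 ≤ unifExp n φ ↔
      (∃ q : (t : Fin n) → (Fin t.1 → Bool) → ℝ,
        (∀ (t : Fin n) (h : Fin t.1 → Bool), |q t h| ≤ 1) ∧
        ∀ y : Fin n → Bool, mistakes n q y ≤ φ y) := by
  have hn0 : (0:ℝ) < n := by exact_mod_cast hn
  constructor
  · intro hE
    classical
    set ext : (t : Fin n) → (Fin t.1 → Bool) → (Fin n → Bool) :=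
      fun t h i => if hi : i.1 < t.1 then h ⟨i.1, hi⟩ else false with hext
    refine ⟨fun t h => (n:ℝ) *
        (V φ (t.1 + 1) (Function.update (ext t h) t false)
          - V φ (t.1 + 1) (Function.update (ext t h) t true)), ?_, ?_⟩
    · intro t h
      rw [abs_mul, abs_sub_comm, abs_of_pos hn0]
      calc (n:ℝ) * |V φ (t.1 + 1) (Function.update (ext t h) t true)
            - V φ (t.1 + 1) (Function.update (ext t h) t false)|
          ≤ (n:ℝ) * (1 / n) := by
            exact mul_le_mul_of_nonneg_left (V_stab φ hφ t (ext t h)) hn0.le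
        _ = 1 := by field_simp
    · intro y
      have hcongr : ∀ (t : Fin n) (b : Bool),
          V φ (t.1 + 1) (Function.update (ext t (pref y t)) t b)
            = V φ (t.1 + 1) (Function.update y t b) := by
        intro t b
        apply V_congr
        intro i hi
        by_cases hit : i = t
        · subst hit; simp
        · have hne : i.1 ≠ t.1 := fun hh => hit (Fin.ext hh)
          have h' : i.1 < t.1 := by omega
          rw [Function.update_of_ne hit, Function.update_of_ne hit]
          simp only [hext, dif_pos h']
          show y _ = y i
          congr 1
      have hterm : ∀ t : Fin n,
          (1 - sgn (y t) * ((n:ℝ) *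
            (V φ (t.1 + 1) (Function.update (ext t (pref y t)) t false)
              - V φ (t.1 + 1) (Function.update (ext t (pref y t)) t true)))) / 2
            = 1 / 2 - (n:ℝ) * (V φ t.1 y - V φ (t.1 + 1) y) := by
        intro t
        rw [hcongr t false, hcongr t true]
        have hrec := V_rec φ t y
        cases hyt : y t
        · have hB : V φ (t.1 + 1) (Function.update y t false) = V φ (t.1 + 1) y := by
            rw [← hyt, Function.update_eq_self]
          rw [← hB]
          simp only [sgn, hyt, Bool.false_eq_true, if_false]
          linear_combination (-(n:ℝ)/2) * hrec
        · have hA : V φ (t.1 + 1) (Function.update y t true) = V φ (t.1 + 1) y := by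
            rw [← hyt, Function.update_eq_self]
          rw [← hA]
          simp only [sgn, hyt, if_true]
          linear_combination (-(n:ℝ)/2) * hrec
      have htel : ∑ t : Fin n, (V φ t.1 y - V φ (t.1 + 1) y)
          = unifExp n φ - φ y := by
        rw [Fin.sum_univ_eq_sum_range (fun i => V φ i y - V φ (i + 1) y) n,
          Finset.sum_range_sub' (fun i => V φ i y) n, V_zero, V_n]
      unfold mistakes
      rw [Finset.sum_congr rfl (fun t _ => hterm t), Finset.sum_sub_distrib,
        ← Finset.mul_sum, htel, Finset.sum_const, Finset.card_univ, Fintype.card_fin,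
        nsmul_eq_mul]
      have : (1 / (n:ℝ)) * ((n:ℝ) * (1 / 2) - (n:ℝ) * (unifExp n φ - φ y))
          = 1 / 2 - (unifExp n φ - φ y) := by
        field_simp
      rw [this]
      linarith
  · rintro ⟨q, -, hq2⟩
    have hzero : ∀ t : Fin n,
        ∑ y : Fin n → Bool, sgn (y t) * q t (pref y t) = 0 := by
      intro t
      have h1 := sum_flip t (fun y => sgn (y t) * q t (pref y t))
      have h2 : ∀ y : Fin n → Bool,
          sgn ((Function.update y t (!(y t))) t)
            * q t (pref (Function.update y t (!(y t))) t)
          = -(sgn (y t) * q t (pref y t)) := by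
        intro y
        have hpref : pref (Function.update y t (!(y t))) t = pref y t := by
          funext s
          unfold pref
          rw [Function.update_of_ne]
          intro hh
          exact absurd (congrArg Fin.val hh) (Nat.ne_of_lt s.2)
        rw [hpref, Function.update_self]
        cases hyt : y t <;> simp [sgn, hyt]
      rw [Finset.sum_congr rfl (fun y _ => h2 y), Finset.sum_neg_distrib] at h1
      linarith
    have hM : ∑ y : Fin n → Bool, mistakes n q y = (2:ℝ) ^ n / 2 := by
      unfold mistakes
      rw [← Finset.mul_sum, Finset.sum_comm]
      have hinner : ∀ t : Fin n,
          ∑ y : Fin n → Bool, (1 - sgn (y t) * q t (pref y t)) / 2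
            = (2:ℝ) ^ n / 2 := by
        intro t
        rw [← Finset.sum_div, Finset.sum_sub_distrib, hzero t, Finset.sum_const,
          Finset.card_univ]
        simp
      rw [Finset.sum_congr rfl (fun t _ => hinner t), Finset.sum_const,
        Finset.card_univ, Fintype.card_fin, nsmul_eq_mul]
      field_simp
    have hle : (2:ℝ) ^ n / 2 ≤ ∑ y : Fin n → Bool, φ y := by
      rw [← hM]
      exact Finset.sum_le_sum fun y _ => hq2 y
    unfold unifExp
    calc (1:ℝ) / 2 = ((2:ℝ) ^ n / 2) / 2 ^ n := by
          field_simp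
      _ ≤ (∑ y : Fin n → Bool, φ y) / 2 ^ n := by gcongr
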